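/- Let d ≥ 3 and let K ⊂ ℤ^d be a finite set of nonzero lattice directions. Then there exist points {ζ_k}_{k∈K} ⊂ ℝ^d and ρ > 0 such that for all k, k' ∈ K with k ≠ k', the ℤ^d-periodized tubes around the lines through ζ_k with direction k are pairwise disjoint: (B_ρ(0) + {ζ_k + sk : s ∈ ℝ} + ℤ^d) ∩ (B_ρ(0) + {ζ_{k'} + s'k' : s' ∈ ℝ} + ℤ^d) = ∅. -/

import Mathlib

noncomputable section

namespace NonNewtonian

open Metric

/-- The real vector in `ℝ^d` associated with a lattice vector `k ∈ ℤ^d`. -/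
def latVec {d : ℕ} (k : Fin d → ℤ) : EuclideanSpace ℝ (Fin d) := WithLp.toLp 2 (fun i => (k i : ℝ))

/-- The `ℤ^d`-periodized open tube of radius `ρ` around the line through `ζ`
with direction `k`: `B_ρ(0) + {ζ + s k : s ∈ ℝ} + ℤ^d`. -/
def periodizedTube {d : ℕ} (ρ : ℝ) (ζ : EuclideanSpace ℝ (Fin d)) (k : Fin d → ℤ) :
    Set (EuclideanSpace ℝ (Fin d)) :=
  {x | ∃ b ∈ ball (0 : EuclideanSpace ℝ (Fin d)) ρ, ∃ s : ℝ, ∃ m : Fin d → ℤ,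
    x = b + (ζ + s • latVec k) + latVec m}

open MeasureTheory RealInnerProductSpace Set

variable {d : ℕ}

lemma inner_latVec (w m : Fin d → ℤ) :
    ⟪latVec w, latVec m⟫ = ((∑ i, w i * m i : ℤ) : ℝ) := by
  simp [latVec, PiLp.inner_apply, RCLike.inner_apply, mul_comm]

/-- The "bad" set, a closed null superset of `span{k,k'} + ℤ^d`. -/
def goodSet (k k' : Fin d → ℤ) : Set (EuclideanSpace ℝ (Fin d)) :=
  {x | ∀ w : Fin d → ℤ, ⟪latVec w, latVec k⟫ = 0 → ⟪latVec w, latVec k'⟫ = 0 →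
    ∃ n : ℤ, ⟪latVec w, x⟫ = (n : ℝ)}

lemma zero_mem_goodSet (k k' : Fin d → ℤ) : (0 : EuclideanSpace ℝ (Fin d)) ∈ goodSet k k' :=
  fun w _ _ => ⟨0, by simp⟩

lemma neg_mem_goodSet {k k' : Fin d → ℤ} {x : EuclideanSpace ℝ (Fin d)}
    (hx : x ∈ goodSet k k') : -x ∈ goodSet k k' := by
  intro w h1 h2
  obtain ⟨n, hn⟩ := hx w h1 h2
  exact ⟨-n, by rw [inner_neg_right, hn]; push_cast; ring⟩

lemma isClosed_goodSet (k k' : Fin d → ℤ) : IsClosed (goodSet k k') := by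
  have : goodSet k k' = ⋂ (w : Fin d → ℤ) (_ : ⟪latVec w, latVec k⟫ = 0)
      (_ : ⟪latVec w, latVec k'⟫ = 0),
      (fun x : EuclideanSpace ℝ (Fin d) => ⟪latVec w, x⟫) ⁻¹' (Set.range ((↑) : ℤ → ℝ)) := by
    ext x
    simp [goodSet, Set.mem_range, eq_comm]
  rw [this]
  refine isClosed_iInter fun w => isClosed_iInter fun _ => isClosed_iInter fun _ => ?_
  exact Int.isClosedEmbedding_coe_real.isClosed_range.preimage
    (Continuous.inner continuous_const continuous_id)

/-- A nonzero integer vector orthogonal to both `k` and `k'` (uses `3 ≤ d`). -/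
lemma exists_ortho (hd : 3 ≤ d) (k k' : Fin d → ℤ) :
    ∃ w : Fin d → ℤ, w ≠ 0 ∧ (∑ i, w i * k i) = 0 ∧ (∑ i, w i * k' i) = 0 := by
  let f : (Fin d → ℚ) →ₗ[ℚ] ℚ × ℚ := LinearMap.prod
    (∑ i, (k i : ℚ) • LinearMap.proj i) (∑ i, (k' i : ℚ) • LinearMap.proj i)
  have hf : ∀ v : Fin d → ℚ, f v = (∑ i, v i * (k i : ℚ), ∑ i, v i * (k' i : ℚ)) := by
    intro v
    simp [f, LinearMap.prod_apply, LinearMap.sum_apply, mul_comm]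
  have hker : ∃ q : Fin d → ℚ, q ≠ 0 ∧ f q = 0 := by
    by_contra h
    push_neg at h
    have hinj : Function.Injective f := by
      rw [← LinearMap.ker_eq_bot, Submodule.eq_bot_iff]
      intro q hq
      by_contra hq0
      exact (h q hq0) hq
    have := LinearMap.finrank_le_finrank_of_injective hinj
    simp [Module.finrank_pi, Module.finrank_prod] at this
    omega
  obtain ⟨q, hq0, hq⟩ := hker
  -- clear denominators
  let N : ℤ := ∏ i, ((q i).den : ℤ)
  have hNdvd : ∀ i, ((q i).den : ℤ) ∣ N := fun i =>
    Finset.dvd_prod_of_mem _ (Finset.mem_univ i)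
  have hN : (N : ℚ) ≠ 0 := by
    have : N ≠ 0 := Finset.prod_ne_zero_iff.2 fun i _ => by
      exact_mod_cast (q i).den_nz
    exact_mod_cast this
  have hint : ∀ i, ∃ z : ℤ, ((z : ℚ)) = (N : ℚ) * q i := by
    intro i
    obtain ⟨c, hc⟩ := hNdvd i
    have hden : ((q i).den : ℚ) ≠ 0 := by exact_mod_cast (q i).den_nz
    have h3 : (q i) * ((q i).den : ℚ) = ((q i).num : ℚ) :=
      (eq_div_iff hden).1 (Rat.num_div_den (q i)).symm
    refine ⟨c * (q i).num, ?_⟩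
    rw [hc]
    push_cast
    rw [← h3]
    ring
  choose w hw using hint
  have hsum : ∀ (u : Fin d → ℤ), (∑ i, q i * (u i : ℚ)) = 0 → (∑ i, w i * u i) = 0 := by
    intro u hu
    have : ((∑ i, w i * u i : ℤ) : ℚ) = (N : ℚ) * ∑ i, q i * (u i : ℚ) := by
      push_cast
      rw [Finset.mul_sum]
      refine Finset.sum_congr rfl fun i _ => ?_
      rw [hw i]
      ring
    rw [hu, mul_zero] at this
    exact_mod_cast this
  have hfq := hf q
  rw [hq] at hfq
  have h1 : (∑ i, q i * (k i : ℚ)) = 0 := by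
    have := congrArg Prod.fst hfq.symm; simpa using this
  have h2 : (∑ i, q i * (k' i : ℚ)) = 0 := by
    have := congrArg Prod.snd hfq.symm; simpa using this
  refine ⟨w, ?_, hsum k h1, hsum k' h2⟩
  obtain ⟨i, hi⟩ := Function.ne_iff.1 hq0
  have : (w i : ℚ) ≠ 0 := by
    rw [hw i]
    exact mul_ne_zero hN (by simpa using hi)
  intro h0
  apply this
  rw [h0]
  simp

lemma volume_goodSet (hd : 3 ≤ d) (k k' : Fin d → ℤ) :
    volume (goodSet k k') = 0 := by
  obtain ⟨w₀, hw0, h1, h2⟩ := exists_ortho hd k k'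
  set v : EuclideanSpace ℝ (Fin d) := latVec w₀ with hv
  have hvne : v ≠ 0 := by
    intro h
    apply hw0
    funext i
    have : (w₀ i : ℝ) = 0 := by
      rw [hv] at h
      simpa [latVec] using congrArg (fun x : EuclideanSpace ℝ (Fin d) => x i) h
    exact_mod_cast this
  have hvv : ⟪v, v⟫ ≠ 0 := fun h => hvne (inner_self_eq_zero.1 h)
  have hsub : goodSet k k' ⊆ ⋃ n : ℤ, {x : EuclideanSpace ℝ (Fin d) | ⟪v, x⟫ = (n : ℝ)} := by
    intro x hx
    obtain ⟨n, hn⟩ := hx w₀ (by rw [inner_latVec, h1]; simp) (by rw [inner_latVec, h2]; simp)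
    exact Set.mem_iUnion.2 ⟨n, hn⟩
  refine measure_mono_null hsub (measure_iUnion_null fun n => ?_)
  set x₀ : EuclideanSpace ℝ (Fin d) := ((n : ℝ) / ⟪v, v⟫) • v with hx₀def
  have hx₀ : ⟪v, x₀⟫ = (n : ℝ) := by
    rw [hx₀def, inner_smul_right, div_mul_cancel₀ _ hvv]
  have hker : LinearMap.ker (innerSL ℝ v : EuclideanSpace ℝ (Fin d) →ₗ[ℝ] ℝ) ≠ ⊤ := by
    intro h
    have : v ∈ LinearMap.ker (innerSL ℝ v : EuclideanSpace ℝ (Fin d) →ₗ[ℝ] ℝ) := h ▸ Submodule.mem_top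
    exact hvv (by simpa using this)
  have hset : {x : EuclideanSpace ℝ (Fin d) | ⟪v, x⟫ = (n : ℝ)} =
      (fun x => x + (-x₀)) ⁻¹' (LinearMap.ker (innerSL ℝ v : EuclideanSpace ℝ (Fin d) →ₗ[ℝ] ℝ) : Set (EuclideanSpace ℝ (Fin d))) := by
    ext x
    simp only [Set.mem_setOf_eq, Set.mem_preimage, SetLike.mem_coe, LinearMap.mem_ker,
      ContinuousLinearMap.coe_coe]
    rw [show ((innerSL ℝ v) (x + -x₀) : ℝ) = ⟪v, x + -x₀⟫ from rfl,
      inner_add_right, inner_neg_right, hx₀]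
    constructor
    · intro h; rw [h]; ring
    · intro h; linarith
  rw [hset, measure_preimage_add_right]
  exact Measure.addHaar_submodule _ _ hker

lemma exists_zeta (hd : 3 ≤ d) (K : Finset (Fin d → ℤ)) :
    ∃ ζ : (Fin d → ℤ) → EuclideanSpace ℝ (Fin d),
      ∀ k ∈ K, ∀ k' ∈ K, k ≠ k' → ζ k - ζ k' ∉ goodSet k k' := by
  induction K using Finset.induction_on with
  | empty => exact ⟨0, by simp⟩
  | @insert a K ha ih =>
    obtain ⟨ζ, hζ⟩ := ih
    set Bad : Set (EuclideanSpace ℝ (Fin d)) :=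
      ⋃ k ∈ K, (fun z => z - ζ k) ⁻¹' (goodSet a k ∪ goodSet k a) with hBaddef
    have hBadnull : volume Bad = 0 := by
      refine measure_iUnion_null fun k => measure_iUnion_null fun hk => ?_
      have hfun : (fun z : EuclideanSpace ℝ (Fin d) => z - ζ k) = fun z => z + (-ζ k) := by
        funext z; rw [sub_eq_add_neg]
      rw [hfun, measure_preimage_add_right]
      exact measure_union_null (volume_goodSet hd a k) (volume_goodSet hd k a)
    have hBadne : Bad ≠ Set.univ := by
      intro h
      have h0 : volume (Set.univ : Set (EuclideanSpace ℝ (Fin d))) = 0 := h ▸ hBadnull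
      have hb := measure_ball_pos volume (0 : EuclideanSpace ℝ (Fin d)) one_pos
      have : volume (ball (0 : EuclideanSpace ℝ (Fin d)) 1) = 0 :=
        measure_mono_null (Set.subset_univ _) h0
      exact absurd this hb.ne'
    obtain ⟨z, hz⟩ := (Set.ne_univ_iff_exists_notMem _).1 hBadne
    refine ⟨Function.update ζ a z, ?_⟩
    intro k hk k' hk' hne
    rcases Finset.mem_insert.1 hk with rfl | hkK <;> rcases Finset.mem_insert.1 hk' with rfl | hk'K
    · exact absurd rfl hne
    · -- here the first index is the new element (named `k` after substitution)
      rw [Function.update_self, Function.update_of_ne (Ne.symm hne)]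
      intro hmem
      exact hz (Set.mem_iUnion₂.2 ⟨k', hk'K, Or.inl hmem⟩)
    · -- here the second index is the new element (named `k'` after substitution)
      rw [Function.update_of_ne hne, Function.update_self]
      intro hmem
      refine hz (Set.mem_iUnion₂.2 ⟨k, hkK, Or.inr ?_⟩)
      simpa [neg_sub] using neg_mem_goodSet hmem
    · have hka : k ≠ a := fun h => ha (h ▸ hkK)
      have hk'a : k' ≠ a := fun h => ha (h ▸ hk'K)
      rw [Function.update_of_ne hka, Function.update_of_ne hk'a]
      exact hζ k hkK k' hk'K hne

/-- **Disjoint periodic tubes** (Lemma 4.2): for `d ≥ 3` and a finite set `K` of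
nonzero lattice directions, there exist anchor points `ζ_k` and a radius `ρ > 0`
such that the periodized tubes around the lines `{ζ_k + s k}` are pairwise
disjoint. -/
theorem disjoint_periodic_tubes (d : ℕ) (hd : 3 ≤ d)
    (K : Finset (Fin d → ℤ)) (hK : ∀ k ∈ K, k ≠ 0) :
    ∃ (ζ : (Fin d → ℤ) → EuclideanSpace ℝ (Fin d)) (ρ : ℝ), 0 < ρ ∧
      ∀ k ∈ K, ∀ k' ∈ K, k ≠ k' →
        periodizedTube ρ (ζ k) k ∩ periodizedTube ρ (ζ k') k' = ∅ := by
  obtain ⟨ζ, hζ⟩ := exists_zeta hd K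
  set P : Finset ((Fin d → ℤ) × (Fin d → ℤ)) := (K ×ˢ K).filter fun p => p.1 ≠ p.2 with hPdef
  set D : (Fin d → ℤ) × (Fin d → ℤ) → ℝ :=
    fun p => infDist (ζ p.1 - ζ p.2) (goodSet p.1 p.2) with hDdef
  have hDpos : ∀ p ∈ P, 0 < D p := by
    intro p hp
    rw [hPdef, Finset.mem_filter, Finset.mem_product] at hp
    exact ((isClosed_goodSet p.1 p.2).notMem_iff_infDist_pos
      ⟨0, zero_mem_goodSet p.1 p.2⟩).1 (hζ p.1 hp.1.1 p.2 hp.1.2 hp.2)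
  set ρ : ℝ := if h : P.Nonempty then (P.inf' h D) / 2 else 1 with hρdef
  have hρpos : 0 < ρ := by
    rw [hρdef]
    split_ifs with h
    · have : 0 < P.inf' h D := (Finset.lt_inf'_iff h).2 hDpos
      linarith
    · norm_num
  refine ⟨ζ, ρ, hρpos, ?_⟩
  intro k hk k' hk' hne
  rw [Set.eq_empty_iff_forall_notMem]
  rintro x ⟨hx1, hx2⟩
  obtain ⟨b, hb, s, m, hxeq⟩ := hx1
  obtain ⟨b', hb', s', m', hxeq'⟩ := hx2
  have hP : P.Nonempty := ⟨(k, k'), by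
    rw [hPdef, Finset.mem_filter, Finset.mem_product]; exact ⟨⟨hk, hk'⟩, hne⟩⟩
  have hρeq : ρ = (P.inf' hP D) / 2 := by rw [hρdef, dif_pos hP]
  have hle : P.inf' hP D ≤ D (k, k') := Finset.inf'_le D (by
    rw [hPdef, Finset.mem_filter, Finset.mem_product]; exact ⟨⟨hk, hk'⟩, hne⟩)
  -- the lattice+lines element
  set y : EuclideanSpace ℝ (Fin d) :=
    s' • latVec k' + latVec m' - s • latVec k - latVec m with hydef
  have hy : y ∈ goodSet k k' := by
    intro w h1 h2
    refine ⟨∑ i, w i * m' i - ∑ i, w i * m i, ?_⟩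
    rw [hydef]
    rw [inner_sub_right, inner_sub_right, inner_add_right, inner_smul_right, inner_smul_right,
      h1, h2, inner_latVec, inner_latVec]
    push_cast
    ring
  have hAB : b + (ζ k + s • latVec k) + latVec m = b' + (ζ k' + s' • latVec k') + latVec m' := by
    rw [← hxeq, hxeq']
  have key : ζ k - ζ k' - y = b' - b := by
    have hb'eq : b' = b + (ζ k + s • latVec k) + latVec m
        - ((ζ k' + s' • latVec k') + latVec m') := by
      rw [eq_sub_iff_add_eq, ← add_assoc]
      exact hAB.symm
    rw [hydef, hb'eq]
    module
  have hnb : ‖b‖ < ρ := by rwa [mem_ball, dist_zero_right] at hb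
  have hnb' : ‖b'‖ < ρ := by rwa [mem_ball, dist_zero_right] at hb'
  have hdist : infDist (ζ k - ζ k') (goodSet k k') ≤ dist (ζ k - ζ k') y :=
    infDist_le_dist_of_mem hy
  rw [dist_eq_norm, key] at hdist
  have hnorm : ‖b' - b‖ < 2 * ρ := by
    calc ‖b' - b‖ ≤ ‖b'‖ + ‖b‖ := norm_sub_le _ _
      _ < 2 * ρ := by linarith
  have hDk : D (k, k') ≤ 2 * ρ := by
    calc D (k, k') = infDist (ζ k - ζ k') (goodSet k k') := rfl
      _ ≤ ‖b' - b‖ := hdist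
      _ ≤ 2 * ρ := hnorm.le
  have : 2 * ρ ≤ D (k, k') := by rw [hρeq]; linarith
  have hlt : D (k, k') < 2 * ρ := lt_of_le_of_lt hdist hnorm
  linarith

end NonNewtonian
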